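/- Let f be absolutely continuous on (a,b), a < b real, 0 < α < 1. Then the ABC operator admits the expansion ^{ABC}D^α_{a+} f(t) = −(B(α) f(a⁺)/(1−α)) E_α(−α(t−a)^α/(1−α)) + (B(α)/(1−α)) Σ_{k=0}^∞ (−α/(1−α))^k J^{αk}_{a+} f(t), where J^{αk}_{a+} is the Riemann–Liouville integral of order αk (with J^0 the identity). -/

import Mathlib

open MeasureTheory

/-- Real one-parameter Mittag-Leffler function `E_α(z) = Σ_k z^k/Γ(αk+1)`. -/
noncomputable def mlR (α z : ℝ) : ℝ := ∑' k : ℕ, z ^ k / Real.Gamma (α * k + 1)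

/-- Riemann–Liouville fractional integral, with the convention `J^0_{a+} f = f`. -/
noncomputable def RLr (a σ : ℝ) (f : ℝ → ℝ) (t : ℝ) : ℝ :=
  if σ = 0 then f t
  else (Real.Gamma σ)⁻¹ * ∫ τ in a..t, (t - τ) ^ (σ - 1) * f τ

/-- Atangana–Baleanu operator in the Caputo sense. -/
noncomputable def ABCop (B α a : ℝ) (f' : ℝ → ℝ) (t : ℝ) : ℝ :=
  (B / (1 - α)) * ∫ τ in a..t, mlR α (-(α / (1 - α)) * (t - τ) ^ α) * f' τ

/-!
Expanding the Mittag-Leffler kernel, `ABCop` becomes `B/(1-α) Σ_k z^k J^{αk+1} f'(t)` with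
`z = -α/(1-α)`: the exchange of sum and integral is dominated convergence, the domination coming
from `Γ(s+1) ≥ R^s e^{-R}`. Since `f = f(a⁺) + J^1 f'`, integration by parts gives
`J^{αk} f = f(a⁺) (t-a)^{αk}/Γ(αk+1) + J^{αk+1} f'`, and the constant terms sum to
`f(a⁺) E_α(z (t-a)^α)`.
-/

open Set Real Interval

theorem Real.rpow_mul_exp_neg_le_Gamma_add_one {s R : ℝ} (hs : 0 ≤ s) (hR : 0 ≤ R) :
    R ^ s * rexp (-R) ≤ Gamma (s + 1) := by
  have hint : IntegrableOn (fun x => rexp (-x) * x ^ s) (Ioi 0) := by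
    simpa using GammaIntegral_convergent (s := s + 1) (by linarith)
  rw [Gamma_eq_integral (by linarith), add_sub_cancel_right]
  calc R ^ s * rexp (-R) = ∫ x in Ioi R, rexp (-x) * R ^ s := by
        rw [integral_mul_const, integral_exp_neg_Ioi, mul_comm]
    _ ≤ ∫ x in Ioi R, rexp (-x) * x ^ s :=
        setIntegral_mono_on ((integrableOn_exp_neg_Ioi R).mul_const _)
          (hint.mono_set (Ioi_subset_Ioi hR)) measurableSet_Ioi fun x hx => by
            gcongr; exact le_of_lt hx
    _ ≤ ∫ x in Ioi 0, rexp (-x) * x ^ s :=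
        setIntegral_mono_set hint
          (ae_restrict_of_forall_mem measurableSet_Ioi fun x (hx : 0 < x) => by positivity)
          (Ioi_subset_Ioi hR).eventuallyLE

theorem summable_pow_div_Gamma_mul_add_one {α : ℝ} (hα : 0 < α) (z : ℝ) :
    Summable fun k : ℕ => z ^ k / Gamma (α * k + 1) := by
  set R := (2 * |z| + 1) ^ α⁻¹
  have hRα : R ^ α = 2 * |z| + 1 := rpow_inv_rpow (by positivity) hα.ne'
  have hratio : |z| / R ^ α < 1 := by
    rw [hRα, div_lt_one (by positivity)]; linarith [abs_nonneg z]
  refine Summable.of_norm_bounded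
    ((summable_geometric_of_lt_one (by positivity) hratio).mul_left (rexp R)) fun k => ?_
  have hΓ := rpow_mul_exp_neg_le_Gamma_add_one (s := α * k) (by positivity) (by positivity : 0 ≤ R)
  rw [rpow_mul (by positivity), rpow_natCast] at hΓ
  calc ‖z ^ k / Gamma (α * k + 1)‖ = |z| ^ k / Gamma (α * k + 1) := by
        rw [norm_div, norm_pow, Real.norm_eq_abs, Real.norm_of_nonneg (hΓ.trans' (by positivity))]
    _ ≤ |z| ^ k / ((R ^ α) ^ k * rexp (-R)) := by gcongr
    _ = rexp R * (|z| / R ^ α) ^ k := by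
        rw [exp_neg, div_pow]; field_simp

theorem hasSum_mlR {α : ℝ} (hα : 0 < α) (z : ℝ) :
    HasSum (fun k : ℕ => z ^ k / Gamma (α * k + 1)) (mlR α z) :=
  (summable_pow_div_Gamma_mul_add_one hα z).hasSum

theorem intervalIntegrable_sub_rpow {σ : ℝ} (hσ : 0 < σ) (a t : ℝ) :
    IntervalIntegrable (fun τ => (t - τ) ^ (σ - 1)) volume a t := by
  simpa using ((intervalIntegral.intervalIntegrable_rpow' (a := 0) (b := t - a)
    (by linarith : -1 < σ - 1)).comp_sub_left t).symm

theorem integral_sub_rpow {σ : ℝ} (hσ : 0 < σ) (s t : ℝ) :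
    ∫ τ in s..t, (t - τ) ^ (σ - 1) = (t - s) ^ σ / σ := by
  rw [intervalIntegral.integral_comp_sub_left (fun x => x ^ (σ - 1)) t, sub_self,
    integral_rpow (Or.inl (by linarith)), sub_add_cancel, zero_rpow hσ.ne', sub_zero]

theorem intervalIntegral.integral_mul_integral_eq_integral_integral_mul {K g : ℝ → ℝ} {a t : ℝ}
    (hK : IntervalIntegrable K volume a t) (hg : IntervalIntegrable g volume a t) :
    ∫ τ in a..t, K τ * ∫ s in a..τ, g s = ∫ s in a..t, (∫ τ in s..t, K τ) * g s := by
  set G := fun x => ∫ s in a..x, g s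
  set H := fun x => ∫ τ in t..x, K τ
  have hGac := hg.absolutelyContinuousOnInterval_intervalIntegral left_mem_uIcc
  have hHac := hK.absolutelyContinuousOnInterval_intervalIntegral right_mem_uIcc
  have hG' : ∀ᵐ x, x ∈ Ι a t → deriv G x = g x := by
    filter_upwards [hg.ae_hasDerivAt_integral] with x hx hxI
    exact (hx (uIoc_subset_uIcc hxI) a left_mem_uIcc).deriv
  have hH' : ∀ᵐ x, x ∈ Ι a t → deriv H x = K x := by
    filter_upwards [hK.ae_hasDerivAt_integral] with x hx hxI
    exact (hx (uIoc_subset_uIcc hxI) t right_mem_uIcc).deriv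
  have hparts := hGac.integral_mul_deriv_eq_deriv_mul hHac
  simp only [intervalIntegral.integral_same, zero_mul, mul_zero, sub_zero, zero_sub] at hparts
  calc ∫ τ in a..t, K τ * G τ = ∫ τ in a..t, G τ * deriv H τ :=
        intervalIntegral.integral_congr_ae (by
          filter_upwards [hH'] with x hx hxI using by rw [hx hxI, mul_comm])
    _ = -∫ s in a..t, deriv G s * H s := hparts
    _ = ∫ s in a..t, (∫ τ in s..t, K τ) * g s := by
        rw [← intervalIntegral.integral_neg]
        refine intervalIntegral.integral_congr_ae ?_
        filter_upwards [hG'] with x hx hxI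
        rw [hx hxI, intervalIntegral.integral_symm t x]
        ring

theorem RLr_zero (a : ℝ) (f : ℝ → ℝ) (t : ℝ) : RLr a 0 f t = f t := if_pos rfl

theorem RLr_of_ne_zero {a σ : ℝ} (hσ : σ ≠ 0) (f : ℝ → ℝ) (t : ℝ) :
    RLr a σ f t = (Gamma σ)⁻¹ * ∫ τ in a..t, (t - τ) ^ (σ - 1) * f τ := if_neg hσ

theorem RLr_add_one {a σ : ℝ} (hσ : 0 ≤ σ) (f : ℝ → ℝ) (t : ℝ) :
    RLr a (σ + 1) f t = (Gamma (σ + 1))⁻¹ * ∫ τ in a..t, (t - τ) ^ σ * f τ := by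
  rw [RLr_of_ne_zero (by positivity), add_sub_cancel_right]

theorem RLr_congr {a σ t : ℝ} {f g : ℝ → ℝ} (hat : a < t) (h : EqOn f g (Ioc a t)) :
    RLr a σ f t = RLr a σ g t := by
  rcases eq_or_ne σ 0 with rfl | hσ
  · simp only [RLr_zero, h ⟨hat, le_rfl⟩]
  · rw [RLr_of_ne_zero hσ, RLr_of_ne_zero hσ,
      intervalIntegral.integral_congr_ae (Filter.Eventually.of_forall fun τ hτ => ?_)]
    rw [uIoc_of_le hat.le] at hτ
    rw [h hτ]

theorem RLr_add {a σ t : ℝ} {f g : ℝ → ℝ} (hσ : 0 ≤ σ)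
    (hf : ContinuousOn f [[a, t]]) (hg : ContinuousOn g [[a, t]]) :
    RLr a σ (fun τ => f τ + g τ) t = RLr a σ f t + RLr a σ g t := by
  rcases hσ.eq_or_lt with rfl | hσ
  · simp only [RLr_zero]
  · simp only [RLr_of_ne_zero hσ.ne', mul_add]
    rw [intervalIntegral.integral_add ((intervalIntegrable_sub_rpow hσ a t).mul_continuousOn hf)
      ((intervalIntegrable_sub_rpow hσ a t).mul_continuousOn hg), mul_add]

theorem RLr_const {σ : ℝ} (hσ : 0 ≤ σ) (a c t : ℝ) :
    RLr a σ (fun _ => c) t = c * (t - a) ^ σ / Gamma (σ + 1) := by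
  rcases hσ.eq_or_lt with rfl | hσ
  · simp [RLr_zero]
  · rw [RLr_of_ne_zero hσ.ne', intervalIntegral.integral_mul_const, integral_sub_rpow hσ,
      Gamma_add_one hσ.ne']
    field_simp

theorem RLr_primitive {a σ t : ℝ} {g : ℝ → ℝ} (hσ : 0 ≤ σ) (hg : IntervalIntegrable g volume a t) :
    RLr a σ (fun τ => ∫ s in a..τ, g s) t = RLr a (σ + 1) g t := by
  rw [RLr_add_one hσ]
  rcases hσ.eq_or_lt with rfl | hσ
  · simp [RLr_zero]
  · rw [RLr_of_ne_zero hσ.ne', intervalIntegral.integral_mul_integral_eq_integral_integral_mul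
      (intervalIntegrable_sub_rpow hσ a t) hg, Gamma_add_one hσ.ne']
    simp only [integral_sub_rpow hσ, div_eq_mul_inv, mul_right_comm _ σ⁻¹ (g _),
      intervalIntegral.integral_mul_const]
    rw [mul_inv]
    ring

theorem RLr_eq_of_eqOn_const_add_primitive {a σ t c : ℝ} {f g : ℝ → ℝ} (hσ : 0 ≤ σ) (hat : a < t)
    (hg : IntervalIntegrable g volume a t) (hf : EqOn f (fun τ => c + ∫ s in a..τ, g s) (Ioc a t)) :
    RLr a σ f t = c * (t - a) ^ σ / Gamma (σ + 1) + RLr a (σ + 1) g t := by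
  rw [RLr_congr hat hf, RLr_add hσ continuousOn_const
    (hg.absolutelyContinuousOnInterval_intervalIntegral left_mem_uIcc).continuousOn,
    RLr_const hσ, RLr_primitive hσ hg]

theorem hasSum_pow_mul_RLr_add_one {α a t : ℝ} {g : ℝ → ℝ} (hα : 0 < α) (z : ℝ)
    (hat : a ≤ t) (hg : IntervalIntegrable g volume a t) :
    HasSum (fun k : ℕ => z ^ k * RLr a (α * k + 1) g t)
      (∫ τ in a..t, mlR α (z * (t - τ) ^ α) * g τ) := by
  have hterm (k : ℕ) : z ^ k * RLr a (α * k + 1) g t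
      = ∫ τ in a..t, (z * (t - τ) ^ α) ^ k / Gamma (α * k + 1) * g τ := by
    rw [RLr_add_one (by positivity), ← mul_assoc, ← intervalIntegral.integral_const_mul]
    refine intervalIntegral.integral_congr fun τ hτ => ?_
    rw [uIcc_of_le hat] at hτ
    rw [mul_pow, ← rpow_mul_natCast (sub_nonneg.2 hτ.2)]
    ring
  simp only [hterm]
  refine intervalIntegral.hasSum_integral_of_dominated_convergence
    (fun k τ => (|z| * (t - a) ^ α) ^ k / Gamma (α * k + 1) * |g τ|) (fun k => ?_) (fun k => ?_)
    (Filter.Eventually.of_forall fun τ _ => (summable_pow_div_Gamma_mul_add_one hα _).mul_right _)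
    ?_ (Filter.Eventually.of_forall fun τ _ => (hasSum_mlR hα _).mul_right _)
  · have hcont : Continuous fun τ => (z * (t - τ) ^ α) ^ k / Gamma (α * k + 1) := by
      fun_prop (disch := positivity)
    exact hcont.aestronglyMeasurable.mul hg.def'.aestronglyMeasurable
  · refine Filter.Eventually.of_forall fun τ hτ => ?_
    rw [uIoc_of_le hat] at hτ
    have hτt : 0 ≤ t - τ := sub_nonneg.2 hτ.2
    have hΓ : 0 < Gamma (α * k + 1) := Gamma_pos_of_pos (by positivity)
    rw [norm_mul, norm_div, norm_pow, Real.norm_of_nonneg hΓ.le, norm_mul,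
      Real.norm_of_nonneg (rpow_nonneg hτt _), Real.norm_eq_abs, Real.norm_eq_abs]
    gcongr
    exact hτ.1.le
  · simp only [tsum_mul_right]
    exact hg.abs.const_mul _

theorem hasSum_pow_mul_RLr {α a t c : ℝ} {f g : ℝ → ℝ} (hα : 0 < α) (z : ℝ) (hat : a < t)
    (hg : IntervalIntegrable g volume a t) (hf : EqOn f (fun τ => c + ∫ s in a..τ, g s) (Ioc a t)) :
    HasSum (fun k : ℕ => z ^ k * RLr a (α * k) f t)
      (c * mlR α (z * (t - a) ^ α) + ∫ τ in a..t, mlR α (z * (t - τ) ^ α) * g τ) := by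
  have hterm (k : ℕ) : z ^ k * RLr a (α * k) f t
      = c * ((z * (t - a) ^ α) ^ k / Gamma (α * k + 1)) + z ^ k * RLr a (α * k + 1) g t := by
    rw [RLr_eq_of_eqOn_const_add_primitive (by positivity) hat hg hf, mul_pow,
      ← rpow_mul_natCast (sub_nonneg.2 hat.le)]
    ring
  simp only [hterm]
  exact ((hasSum_mlR hα _).mul_left c).add (hasSum_pow_mul_RLr_add_one hα z hat.le hg)

theorem ABC_eq_tsum_RL_general (a b α B fA : ℝ) (f f' : ℝ → ℝ)
    (hα : 0 < α)
    (hf' : IntervalIntegrable f' volume a b)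
    (hf : ∀ t ∈ Set.Ioo a b, f t = fA + ∫ τ in a..t, f' τ) :
    ∀ t ∈ Set.Ioo a b,
      ABCop B α a f' t =
        -(B * fA / (1 - α)) * mlR α (-(α / (1 - α)) * (t - a) ^ α) +
          (B / (1 - α)) * ∑' k : ℕ, (-(α / (1 - α))) ^ k * RLr a (α * k) f t := by
  rintro t ⟨hat, htb⟩
  have hf'_at : IntervalIntegrable f' volume a t :=
    hf'.mono_set (uIcc_subset_uIcc_left (mem_uIcc_of_le hat.le htb.le))
  have hsum := hasSum_pow_mul_RLr hα (-(α / (1 - α))) hat hf'_at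
    fun τ hτ => hf τ ⟨hτ.1, hτ.2.trans_lt htb⟩
  rw [hsum.tsum_eq, ABCop]
  ring

/-- Expansion of the ABC operator:
`^{ABC}D^α_{a+} f(t) = −(B(α)f(a⁺)/(1−α)) E_α(−α(t−a)^α/(1−α))
  + (B(α)/(1−α)) Σ_k (−α/(1−α))^k J^{αk}_{a+} f(t)`. -/
theorem ABC_eq_tsum_RL (a b α B fA : ℝ) (f f' : ℝ → ℝ)
    (hab : a < b) (hα : 0 < α) (hα1 : α < 1)
    (hf' : IntervalIntegrable f' volume a b)
    (hf : ∀ t ∈ Set.Ioo a b, f t = fA + ∫ τ in a..t, f' τ) :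
    ∀ t ∈ Set.Ioo a b,
      ABCop B α a f' t =
        -(B * fA / (1 - α)) * mlR α (-(α / (1 - α)) * (t - a) ^ α) +
          (B / (1 - α)) * ∑' k : ℕ, (-(α / (1 - α))) ^ k * RLr a (α * k) f t :=
  ABC_eq_tsum_RL_general a b α B fA f f' hα hf' hf
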